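/- Let Q = conv S ⊆ ℝ^n be the convex hull of a finite set S, with affine span of Q equal to all of ℝ^n. Let F be a facet of Q, i.e., an exposed face of Q of dimension n − 1. If at least two extreme points of Q do not lie in F, then there exist distinct extreme points x, y of Q such that the segment conv{x, y} is an exposed face of Q and conv{x, y} ∩ F = ∅. -/

import Mathlib

open Set

section Helpers

variable {n : ℕ}

/-- The set of maximizers of a linear functional over a set. -/
def amax (χ : (Fin n → ℝ) →ₗ[ℝ] ℝ) (V : Set (Fin n → ℝ)) : Set (Fin n → ℝ) :=
  {v ∈ V | ∀ u ∈ V, χ u ≤ χ v}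

lemma amax_nonempty {χ : (Fin n → ℝ) →ₗ[ℝ] ℝ} {V : Set (Fin n → ℝ)} (hV : V.Finite)
    (hne : V.Nonempty) : (amax χ V).Nonempty := by
  obtain ⟨a, ha, hmax⟩ := Set.exists_max_image V χ hV hne
  exact ⟨a, ha, hmax⟩

lemma le_on_hull {χ : (Fin n → ℝ) →ₗ[ℝ] ℝ} {V : Set (Fin n → ℝ)} {c : ℝ}
    (h : ∀ u ∈ V, χ u ≤ c) : ∀ z ∈ convexHull ℝ V, χ z ≤ c :=
  fun _ hz => convexHull_min h (convex_halfSpace_le χ.isLinear c) hz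

end Helpers

section Helpers
variable {n : ℕ}

lemma face_eq {χ : (Fin n → ℝ) →ₗ[ℝ] ℝ} {V : Set (Fin n → ℝ)} (hV : V.Finite)
    (hne : V.Nonempty) :
    {x ∈ convexHull ℝ V | ∀ y ∈ convexHull ℝ V, χ y ≤ χ x} = convexHull ℝ (amax χ V) := by
  obtain ⟨v0, hv0⟩ := amax_nonempty (χ := χ) hV hne
  set c := χ v0 with hc
  have hle : ∀ z ∈ convexHull ℝ V, χ z ≤ c := le_on_hull (fun u hu => hv0.2 u hu)
  have hAval : ∀ u ∈ amax χ V, χ u = c := fun u hu => le_antisymm (hv0.2 u hu.1) (hu.2 v0 hv0.1)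
  apply Set.Subset.antisymm
  · rintro x ⟨hxQ, hxmax⟩
    have hxc : χ x = c := le_antisymm (hle x hxQ)
      (hxmax v0 (subset_convexHull ℝ V hv0.1))
    rw [hV.convexHull_eq] at hxQ
    obtain ⟨w, hw0, hw1, hwx⟩ := hxQ
    have hxval : χ x = ∑ y ∈ hV.toFinset, w y * χ y := by
      rw [← hwx, Finset.centerMass_eq_of_sum_1 _ _ hw1]
      rw [map_sum]
      simp [map_smul, smul_eq_mul]
    have hzero : ∑ y ∈ hV.toFinset, w y * (c - χ y) = 0 := by
      have : ∑ y ∈ hV.toFinset, w y * (c - χ y)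
          = (∑ y ∈ hV.toFinset, w y) * c - ∑ y ∈ hV.toFinset, w y * χ y := by
        rw [Finset.sum_mul, ← Finset.sum_sub_distrib]
        congr 1; ext y; ring
      rw [this, hw1, one_mul, ← hxval, hxc, sub_self]
    have hsupp : ∀ y ∈ hV.toFinset, w y ≠ 0 → y ∈ amax χ V := by
      intro y hy hwy
      have hyV : y ∈ V := hV.mem_toFinset.1 hy
      have hterm : ∀ z ∈ hV.toFinset, 0 ≤ w z * (c - χ z) := by
        intro z hz
        exact mul_nonneg (hw0 z (hV.mem_toFinset.1 hz)) (sub_nonneg.2 (hle z (subset_convexHull ℝ V (hV.mem_toFinset.1 hz))))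
      have := (Finset.sum_eq_zero_iff_of_nonneg hterm).1 hzero y hy
      have hcy : χ y = c := by
        rcases mul_eq_zero.1 this with h | h
        · exact absurd h hwy
        · linarith [sub_eq_zero.1 h]
      exact ⟨hyV, fun u hu => by rw [hcy]; exact hle u (subset_convexHull ℝ V hu)⟩
    rw [← hwx, ← Finset.centerMass_filter_ne_zero]
    apply Finset.centerMass_mem_convexHull
    · intro i hi; exact hw0 i (hV.mem_toFinset.1 (Finset.mem_filter.1 hi).1)
    · rw [Finset.sum_filter_ne_zero, hw1]; exact zero_lt_one
    · intro i hi
      obtain ⟨hi1, hi2⟩ := Finset.mem_filter.1 hi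
      exact hsupp i hi1 hi2
  · intro z hz
    have hzQ : z ∈ convexHull ℝ V := convexHull_mono (fun u hu => hu.1) hz
    have hzc : χ z = c := by
      have h1 : χ z ≤ c := le_on_hull (fun u hu => (hAval u hu).le) z hz
      have h2 : c ≤ χ z := by
        have : ∀ w ∈ convexHull ℝ (amax χ V), c ≤ χ w := fun w hw =>
          convexHull_min (fun u hu => (hAval u hu).ge) (convex_halfSpace_ge χ.isLinear c) hw
        exact this z hz
      exact le_antisymm h1 h2
    exact ⟨hzQ, fun y hy => by rw [hzc]; exact hle y hy⟩

/-- Combining functionals: an exposed subface of an exposed face is exposed. -/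
lemma combine {V : Set (Fin n → ℝ)} (hV : V.Finite) {χ₁ χ₂ : (Fin n → ℝ) →ₗ[ℝ] ℝ}
    (hB : (amax χ₂ (amax χ₁ V)).Nonempty) :
    ∃ ε : ℝ, 0 < ε ∧ amax (χ₁ + ε • χ₂) V = amax χ₂ (amax χ₁ V) := by
  obtain ⟨b0, hb0⟩ := hB
  set A := amax χ₁ V with hA
  set c1 := χ₁ b0 with hc1
  set c2 := χ₂ b0 with hc2
  have hb0A : b0 ∈ A := hb0.1
  have hb0V : b0 ∈ V := hb0A.1
  have hmax1 : ∀ u ∈ V, χ₁ u ≤ c1 := fun u hu => hb0A.2 u hu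
  have hmax2 : ∀ u ∈ A, χ₂ u ≤ c2 := fun u hu => hb0.2 u hu
  -- choose ε
  have key : ∃ ε : ℝ, 0 < ε ∧ ∀ u ∈ V, u ∉ A → χ₁ u + ε * χ₂ u < c1 + ε * c2 := by
    set D := {u ∈ V | u ∉ A} with hD
    have hDfin : D.Finite := hV.subset (fun u hu => hu.1)
    have hlt : ∀ u ∈ D, χ₁ u < c1 := by
      intro u hu
      rcases lt_or_eq_of_le (hmax1 u hu.1) with h | h
      · exact h
      · exfalso; exact hu.2 ⟨hu.1, fun z hz => h ▸ hmax1 z hz⟩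
    rcases D.eq_empty_or_nonempty with hDe | hDne
    · exact ⟨1, zero_lt_one, fun u hu huA => absurd (show u ∈ D from ⟨hu, huA⟩) (hDe ▸ notMem_empty u)⟩
    · set ε0 : (Fin n → ℝ) → ℝ := fun u => (c1 - χ₁ u) / (|χ₂ u - c2| + 1) with hε0
      obtain ⟨a, haD, hamin⟩ := Set.exists_min_image D ε0 hDfin hDne
      refine ⟨ε0 a, ?_, ?_⟩
      · exact div_pos (sub_pos.2 (hlt a haD)) (by positivity)
      · intro u hu huA
        have huD : u ∈ D := ⟨hu, huA⟩
        have h1 : ε0 a ≤ ε0 u := hamin u huD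
        have h2 : ε0 u * (|χ₂ u - c2| + 1) = c1 - χ₁ u := by
          rw [hε0]; field_simp
        have h3 : ε0 a * (χ₂ u - c2) < c1 - χ₁ u := by
          calc ε0 a * (χ₂ u - c2) ≤ ε0 a * |χ₂ u - c2| := by
                exact mul_le_mul_of_nonneg_left (le_abs_self _)
                  (le_of_lt (div_pos (sub_pos.2 (hlt a haD)) (by positivity)))
            _ ≤ ε0 u * |χ₂ u - c2| := by
                exact mul_le_mul_of_nonneg_right h1 (abs_nonneg _)
            _ < ε0 u * (|χ₂ u - c2| + 1) := by
                have : 0 < ε0 u := div_pos (sub_pos.2 (hlt u huD)) (by positivity)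
                nlinarith
            _ = c1 - χ₁ u := h2
        nlinarith
  obtain ⟨ε, hε, hεlt⟩ := key
  refine ⟨ε, hε, ?_⟩
  have hval : ∀ u : Fin n → ℝ, (χ₁ + ε • χ₂) u = χ₁ u + ε * χ₂ u := by
    intro u; simp [smul_eq_mul]
  have hvb0 : (χ₁ + ε • χ₂) b0 = c1 + ε * c2 := by rw [hval]
  have hub : ∀ u ∈ V, (χ₁ + ε • χ₂) u ≤ c1 + ε * c2 := by
    intro u hu
    rw [hval]
    by_cases huA : u ∈ A
    · have h1 : χ₁ u = c1 := le_antisymm (hmax1 u hu) (huA.2 b0 hb0V)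
      have h2 : χ₂ u ≤ c2 := hmax2 u huA
      nlinarith
    · exact le_of_lt (hεlt u hu huA)
  ext u
  constructor
  · rintro ⟨huV, humax⟩
    have h1 : c1 + ε * c2 ≤ (χ₁ + ε • χ₂) u := hvb0 ▸ humax b0 hb0V
    have heq : (χ₁ + ε • χ₂) u = c1 + ε * c2 := le_antisymm (hub u huV) h1
    have huA : u ∈ A := by
      by_contra huA
      exact absurd heq (ne_of_lt (by rw [hval]; exact hεlt u huV huA))
    have hχ1 : χ₁ u = c1 := le_antisymm (hmax1 u huV) (huA.2 b0 hb0V)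
    have hχ2 : χ₂ u = c2 := by
      rw [hval, hχ1] at heq
      have := mul_left_cancel₀ (ne_of_gt hε) (by linarith : ε * χ₂ u = ε * c2)
      exact this
    exact ⟨huA, fun z hz => hχ2 ▸ hmax2 z hz⟩
  · rintro ⟨huA, humax⟩
    have hχ1 : χ₁ u = c1 := le_antisymm (hmax1 u huA.1) (huA.2 b0 hb0V)
    have hχ2 : χ₂ u = c2 := le_antisymm (hmax2 u huA) (humax b0 hb0A)
    refine ⟨huA.1, fun z hz => ?_⟩
    have : (χ₁ + ε • χ₂) u = c1 + ε * c2 := by rw [hval, hχ1, hχ2]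
    rw [this]
    exact hub z hz

/-- An extreme point of convex `Q` is strictly separated from the hull of any finite
subset of `Q` avoiding it. -/
lemma extreme_sep {Q : Set (Fin n → ℝ)} (hQ : Convex ℝ Q) {w : Fin n → ℝ}
    (hw : w ∈ Q.extremePoints ℝ) {t : Set (Fin n → ℝ)} (ht : t.Finite) (htQ : t ⊆ Q)
    (hwt : w ∉ t) : ∃ g : (Fin n → ℝ) →ₗ[ℝ] ℝ, ∀ b ∈ t, g b < g w := by
  have hwnc : w ∉ convexHull ℝ t := by
    intro hmem
    have hsub : convexHull ℝ t ⊆ Q := convexHull_min htQ hQ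
    have hwext : w ∈ (convexHull ℝ t).extremePoints ℝ := by
      refine ⟨hmem, fun x₁ hx₁ x₂ hx₂ hseg => ?_⟩
      exact hw.2 (hsub hx₁) (hsub hx₂) hseg
    exact hwt (extremePoints_convexHull_subset hwext)
  obtain ⟨f, u, hfu, huw⟩ := geometric_hahn_banach_closed_point
    (convex_convexHull ℝ t) (ht.isClosed_convexHull ℝ) hwnc
  exact ⟨f.toLinearMap, fun b hb => lt_trans (hfu b (subset_convexHull ℝ t hb)) huw⟩

/-- Pivot lemma: rotating a functional `g` towards one with unique maximizer `v`
yields a functional maximized at `v` together with the points of max "ratio". -/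
lemma pivot {V : Set (Fin n → ℝ)} (hV : V.Finite) {χ₀ g : (Fin n → ℝ) →ₗ[ℝ] ℝ}
    {v w : Fin n → ℝ} (hv : v ∈ V) (hw : w ∈ V) (hwv : w ≠ v)
    (hmax : ∀ u ∈ V, u ≠ v → χ₀ u < χ₀ v) (hg : g v < g w) :
    ∃ t : ℝ,
      (g w - g v) / (χ₀ v - χ₀ w) ≤ t ∧
      v ∈ amax (g + t • χ₀) V ∧
      (∃ u ∈ amax (g + t • χ₀) V, u ≠ v) ∧
      (∀ u ∈ amax (g + t • χ₀) V, u ≠ v → t ≤ (g u - g v) / (χ₀ v - χ₀ u)) := by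
  set r : (Fin n → ℝ) → ℝ := fun u => (g u - g v) / (χ₀ v - χ₀ u) with hr
  have hne : (V \ {v}).Nonempty := ⟨w, hw, hwv⟩
  obtain ⟨u0, hu0, hu0max⟩ := Set.exists_max_image (V \ {v}) r (hV.subset diff_subset) hne
  set t := r u0 with ht
  have hrw : r w ≤ t := hu0max w ⟨hw, hwv⟩
  have hden : ∀ u ∈ V, u ≠ v → 0 < χ₀ v - χ₀ u := fun u hu huv => sub_pos.2 (hmax u hu huv)
  have hval : ∀ u : Fin n → ℝ, (g + t • χ₀) u = g u + t * χ₀ u := by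
    intro u; simp [smul_eq_mul]
  have hle : ∀ u ∈ V, (g + t • χ₀) u ≤ (g + t • χ₀) v := by
    intro u hu
    rcases eq_or_ne u v with rfl | huv
    · exact le_refl _
    · have hd := hden u hu huv
      have h1 : r u ≤ t := hu0max u ⟨hu, huv⟩
      rw [hval, hval]
      have := (div_le_iff₀ hd).1 h1
      nlinarith
  have hvA : v ∈ amax (g + t • χ₀) V := ⟨hv, hle⟩
  have hu0A : u0 ∈ amax (g + t • χ₀) V := by
    refine ⟨hu0.1, fun z hz => ?_⟩
    have hd := hden u0 hu0.1 hu0.2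
    have : (g + t • χ₀) u0 = (g + t • χ₀) v := by
      rw [hval, hval]
      have : (g u0 - g v) = t * (χ₀ v - χ₀ u0) := by
        rw [ht, hr]; field_simp
      nlinarith
    rw [this]; exact hle z hz
  refine ⟨t, hrw, hvA, ⟨u0, hu0A, hu0.2⟩, ?_⟩
  intro u huA huv
  have hd := hden u huA.1 huv
  have heq : (g + t • χ₀) u = (g + t • χ₀) v := le_antisymm (hle u huA.1) (huA.2 v hv)
  rw [hval, hval] at heq
  rw [le_div_iff₀ hd]
  nlinarith

/-- If `V` has more than two points, all extreme in its hull, then (given any `φ`) there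
is a functional `g` that is not of the form `a + b • φ` on `V`. -/
lemma exists_good_g {V : Set (Fin n → ℝ)} (hV : V.Finite) (h3 : 2 < V.ncard)
    (hex : ∀ v ∈ V, v ∈ (convexHull ℝ V).extremePoints ℝ) (φ : (Fin n → ℝ) →ₗ[ℝ] ℝ) :
    ∃ g : (Fin n → ℝ) →ₗ[ℝ] ℝ, ∀ a b : ℝ, ∃ u ∈ V, g u ≠ a + b * φ u := by
  by_contra hcon
  push_neg at hcon
  have h' : ∀ i : Fin n, ∃ a b : ℝ, ∀ u ∈ V, u i = a + b * φ u := by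
    intro i
    obtain ⟨a, b, hab⟩ := hcon (LinearMap.proj i)
    exact ⟨a, b, fun u hu => hab u hu⟩
  choose a b hab using h'
  have hrep : ∀ u ∈ V, u = (a : Fin n → ℝ) + φ u • (b : Fin n → ℝ) := by
    intro u hu
    funext i
    simp only [Pi.add_apply, Pi.smul_apply, smul_eq_mul]
    rw [hab i u hu]; ring
  have hinj : ∀ u ∈ V, ∀ u' ∈ V, φ u = φ u' → u = u' := by
    intro u hu u' hu' hphi
    rw [hrep u hu, hrep u' hu', hphi]
  have hVne : V.Nonempty := by
    rcases V.eq_empty_or_nonempty with rfl | h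
    · simp at h3
    · exact h
  obtain ⟨p, hp, hpmax⟩ := Set.exists_max_image V φ hV hVne
  obtain ⟨q, hq, hqmin⟩ := Set.exists_min_image V φ hV hVne
  have hVpq : ¬ V ⊆ ({p, q} : Set (Fin n → ℝ)) := by
    intro hsub
    have h1 : V.ncard ≤ ({p, q} : Set (Fin n → ℝ)).ncard :=
      Set.ncard_le_ncard hsub ((Set.finite_singleton q).insert p)
    have h2 : ({p, q} : Set (Fin n → ℝ)).ncard ≤ 2 := by
      apply (Set.ncard_insert_le p _).trans
      simp [Set.ncard_singleton]
    omega
  obtain ⟨u, hu, hu'⟩ := Set.not_subset.1 hVpq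
  have hup : u ≠ p := fun h => hu' (by simp [h])
  have huq : u ≠ q := fun h => hu' (by simp [h])
  have h1 : φ u < φ p := lt_of_le_of_ne (hpmax u hu) (fun h => hup (hinj u hu p hp h))
  have h2 : φ q < φ u := lt_of_le_of_ne (hqmin u hu) (fun h => huq ((hinj u hu q hq h.symm)))
  set θ := (φ p - φ u) / (φ p - φ q) with hθ
  have hpq : 0 < φ p - φ q := by linarith
  have hθ0 : 0 < θ := div_pos (by linarith) hpq
  have hθ1 : θ < 1 := by
    rw [hθ, div_lt_one hpq]; linarith
  have hsc : θ * φ q + (1 - θ) * φ p = φ u := by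
    have : θ * (φ p - φ q) = φ p - φ u := by rw [hθ, div_mul_cancel₀ _ hpq.ne']
    linear_combination -this
  have hkey : θ • q + (1 - θ) • p = u := by
    rw [hrep u hu, hrep q hq, hrep p hp, ← hsc]
    module
  have hmem : u ∈ openSegment ℝ q p :=
    ⟨θ, 1 - θ, hθ0, by linarith, by ring, hkey⟩
  have := (hex u hu).2 (subset_convexHull ℝ V hq) (subset_convexHull ℝ V hp) hmem
  exact huq this.symm


/-- Descent: a polytope vertex set with at least two vertices has an "edge":
a pair which is the exact maximizer set of some functional. -/
lemma descent : ∀ k : ℕ, ∀ V : Set (Fin n → ℝ), V.Finite → V.ncard ≤ k → 2 ≤ V.ncard →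
    (∀ v ∈ V, v ∈ (convexHull ℝ V).extremePoints ℝ) →
    ∃ x y χ, x ≠ y ∧ ({x, y} : Set (Fin n → ℝ)) ⊆ V ∧ amax χ V = {x, y} := by
  intro k
  induction k with
  | zero => intro V _ h0 h2 _; omega
  | succ k ih =>
    intro V hV hk h2 hex
    rcases eq_or_lt_of_le h2 with heq | h3
    · obtain ⟨x, y, hxy, rfl⟩ := Set.ncard_eq_two.1 heq.symm
      refine ⟨x, y, 0, hxy, subset_rfl, ?_⟩
      ext u; simp [amax]
    · have hVne : V.Nonempty := by
        rcases V.eq_empty_or_nonempty with rfl | h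
        · simp at h3
        · exact h
      obtain ⟨x, hx⟩ := hVne
      -- exposing functional for x
      obtain ⟨φ, hφ⟩ := extreme_sep (t := V \ {x}) (convex_convexHull ℝ V) (hex x hx)
        (hV.subset diff_subset) (diff_subset.trans (subset_convexHull ℝ V))
        (by simp)
      have hφmax : ∀ u ∈ V, u ≠ x → φ u < φ x := fun u hu hux => hφ u ⟨hu, hux⟩
      -- good pivot functional
      obtain ⟨g0, hg0⟩ := exists_good_g hV h3 hex φ
      obtain ⟨u1, hu1V, hne1⟩ := hg0 (g0 x) 0
      rw [zero_mul, add_zero] at hne1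
      have hgood : ∃ g : (Fin n → ℝ) →ₗ[ℝ] ℝ,
          (∀ a b : ℝ, ∃ u ∈ V, g u ≠ a + b * φ u) ∧ ∃ u ∈ V, g x < g u := by
        rcases lt_or_gt_of_ne hne1 with hlt | hgt
        · refine ⟨-g0, fun a b => ?_, ⟨u1, hu1V, by simpa using hlt⟩⟩
          obtain ⟨u, hu, hne⟩ := hg0 (-a) (-b)
          refine ⟨u, hu, fun h => hne ?_⟩
          have : -g0 u = a + b * φ u := by simpa using h
          linarith [this]
        · exact ⟨g0, hg0, ⟨u1, hu1V, hgt⟩⟩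
      obtain ⟨g, hgNC, u1', hu1'V, hgx⟩ := hgood
      have hu1'x : u1' ≠ x := fun h => by rw [h] at hgx; exact lt_irrefl _ hgx
      obtain ⟨t, hrw, hxA, ⟨u2, hu2A, hu2x⟩, hach⟩ :=
        pivot hV hx hu1'V hu1'x hφmax hgx
      set A := amax (g + t • φ) V with hAdef
      have hAV : A ⊆ V := fun u hu => hu.1
      have hAfin : A.Finite := hV.subset hAV
      have hA2 : 2 ≤ A.ncard := by
        have hsub : ({x, u2} : Set (Fin n → ℝ)) ⊆ A := by
          intro z hz; rcases hz with rfl | hz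
          · exact hxA
          · rw [Set.mem_singleton_iff] at hz; exact hz ▸ hu2A
        calc 2 = ({x, u2} : Set (Fin n → ℝ)).ncard := (Set.ncard_pair (Ne.symm hu2x)).symm
          _ ≤ A.ncard := Set.ncard_le_ncard hsub hAfin
      have hAne : A ≠ V := by
        intro hAV_eq
        obtain ⟨u3, hu3, hneq⟩ := hgNC (g x + t * φ x) (-t)
        apply hneq
        have hu3A : u3 ∈ A := hAV_eq ▸ hu3
        have hxA' : x ∈ A := hxA
        have heq : (g + t • φ) u3 = (g + t • φ) x :=
          le_antisymm (hxA'.2 u3 (hAV hu3A)) (hu3A.2 x hx)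
        simp only [LinearMap.add_apply, LinearMap.smul_apply, smul_eq_mul] at heq
        linarith
      have hAk : A.ncard ≤ k := by
        have := Set.ncard_lt_ncard (ssubset_of_subset_of_ne hAV hAne) hV
        omega
      have hexA : ∀ v ∈ A, v ∈ (convexHull ℝ A).extremePoints ℝ := by
        intro v hv
        have h1 := hex v (hAV hv)
        refine ⟨subset_convexHull ℝ A hv, fun x₁ h₁ x₂ h₂ hseg => ?_⟩
        exact h1.2 (convexHull_mono hAV h₁) (convexHull_mono hAV h₂) hseg
      obtain ⟨x', y', χ', hxy', hsub', hχ'⟩ := ih A hAfin hAk hA2 hexA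
      have hB : (amax χ' (amax (g + t • φ) V)).Nonempty := by
        rw [← hAdef, hχ']
        exact ⟨x', by left; rfl⟩
      obtain ⟨ε, hε, hεeq⟩ := combine hV hB
      refine ⟨x', y', (g + t • φ) + ε • χ', hxy', hsub'.trans hAV, ?_⟩
      rw [hεeq, ← hAdef, hχ']

end Helpers
/-- `F` is an exposed face of `Q`: the set of maximizers over `Q` of some linear
functional. -/
def IsExposedFaceOf {n : ℕ} (Q F : Set (Fin n → ℝ)) : Prop :=
  ∃ ψ : (Fin n → ℝ) →ₗ[ℝ] ℝ, F = {x ∈ Q | ∀ y ∈ Q, ψ y ≤ ψ x}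

/-- Let `Q = conv S ⊆ ℝⁿ` be a full-dimensional polytope (`S` finite) and
`F` a facet of `Q` (an exposed face of dimension `n − 1`).  If at least two extreme points
of `Q` are not in `F`, then some edge of `Q` — an exposed face `conv {x, y}` with `x, y`
distinct extreme points — is disjoint from `F`. -/
theorem statement18 {n : ℕ} (S : Set (Fin n → ℝ)) (hS : S.Finite)
    (Q : Set (Fin n → ℝ)) (hQ : Q = convexHull ℝ S)
    (hfull : affineSpan ℝ Q = ⊤)
    (F : Set (Fin n → ℝ)) (hF : IsExposedFaceOf Q F)
    (hdim : Module.finrank ℝ (affineSpan ℝ F).direction = n - 1)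
    (hext : ∃ x y, x ∈ Q.extremePoints ℝ ∧ y ∈ Q.extremePoints ℝ ∧ x ≠ y ∧
      x ∉ F ∧ y ∉ F) :
    ∃ x y, x ∈ Q.extremePoints ℝ ∧ y ∈ Q.extremePoints ℝ ∧ x ≠ y ∧
      IsExposedFaceOf Q (convexHull ℝ {x, y}) ∧ convexHull ℝ {x, y} ∩ F = ∅ := by
  classical
  obtain ⟨ψ, hFψ⟩ := hF
  obtain ⟨x0, y0, hx0, hy0, hxy0, hx0F, hy0F⟩ := hext
  set V : Set (Fin n → ℝ) := Q.extremePoints ℝ with hVdef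
  have hVS : V ⊆ S := by rw [hVdef, hQ]; exact extremePoints_convexHull_subset
  have hVfin : V.Finite := hS.subset hVS
  have hQconv : Convex ℝ Q := hQ ▸ convex_convexHull ℝ S
  have hQcomp : IsCompact Q := hQ ▸ hS.isCompact_convexHull ℝ
  have hVQ : V ⊆ Q := extremePoints_subset
  have hVne : V.Nonempty := ⟨x0, hx0⟩
  have hQV : convexHull ℝ V = Q := by
    have h := closure_convexHull_extremePoints hQcomp hQconv
    rwa [IsClosed.closure_eq (hVfin.isClosed_convexHull ℝ)] at h
  obtain ⟨vF, hvF⟩ := amax_nonempty (χ := ψ) hVfin hVne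
  set c := ψ vF with hc
  have hQle : ∀ z ∈ Q, ψ z ≤ c := by
    intro z hz
    rw [← hQV] at hz
    exact le_on_hull (fun u hu => hvF.2 u hu) z hz
  -- points outside F have ψ-value < c, and conversely
  have hltF : ∀ u ∈ Q, u ∉ F → ψ u < c := by
    intro u huQ huF
    have : ¬ ∀ y ∈ Q, ψ y ≤ ψ u := fun h => huF (by rw [hFψ]; exact ⟨huQ, h⟩)
    push_neg at this
    obtain ⟨y, hyQ, hy⟩ := this
    exact lt_of_lt_of_le hy (hQle y hyQ)
  have hFge : ∀ z ∈ F, c ≤ ψ z := by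
    intro z hz
    rw [hFψ] at hz
    exact hz.2 vF (hVQ hvF.1)
  have hx0c : ψ x0 < c := hltF x0 (hVQ hx0) hx0F
  -- Stage 1: find a functional whose maximizer set over V avoids F-values and has ≥ 2 pts
  have stage1 : ∃ χW : (Fin n → ℝ) →ₗ[ℝ] ℝ,
      (∀ u ∈ amax χW V, ψ u < c) ∧ 2 ≤ (amax χW V).ncard := by
    obtain ⟨v, hvA⟩ := amax_nonempty (χ := -ψ) hVfin hVne
    have hAlt : ∀ u ∈ amax (-ψ) V, ψ u < c := by
      intro u hu
      have h1 : (-ψ) x0 ≤ (-ψ) u := hu.2 x0 hx0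
      simp only [LinearMap.neg_apply, neg_le_neg_iff] at h1
      exact lt_of_le_of_lt h1 hx0c
    by_cases hA2 : 2 ≤ (amax (-ψ) V).ncard
    · exact ⟨-ψ, hAlt, hA2⟩
    · -- unique minimizer v; pivot towards a second witness w ∉ F
      have hAfin : (amax (-ψ) V).Finite := hVfin.subset (fun h hh => hh.1)
      have hA1 : (amax (-ψ) V).ncard = 1 := by
        have h0 : 0 < (amax (-ψ) V).ncard := (Set.ncard_pos hAfin).2 ⟨v, hvA⟩
        omega
      obtain ⟨v', hAv⟩ := Set.ncard_eq_one.1 hA1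
      have hvv' : v = v' := by
        have := hAv ▸ hvA; simpa using this
      subst hvv'
      have hvV : v ∈ V := hvA.1
      obtain ⟨w, hwV, hwF, hwv⟩ : ∃ w, w ∈ V ∧ w ∉ F ∧ w ≠ v := by
        rcases eq_or_ne x0 v with rfl | h
        · exact ⟨y0, hy0, hy0F, fun hh => hxy0 hh.symm⟩
        · exact ⟨x0, hx0, hx0F, h⟩
      have hwc : ψ w < c := hltF w (hVQ hwV) hwF
      have hwamax : w ∉ amax ψ V := by
        intro hw
        have : ψ vF ≤ ψ w := hw.2 vF hvF.1
        rw [← hc] at this; linarith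
      obtain ⟨g, hg⟩ := extreme_sep (t := amax ψ V ∪ {v}) hQconv hwV
        ((hVfin.subset (fun h hh => hh.1)).union (Set.finite_singleton v))
        (by
          rintro b (hb | hb)
          · exact hVQ hb.1
          · rw [Set.mem_singleton_iff] at hb; exact hb ▸ hVQ hvV)
        (by
          rintro (hb | hb)
          · exact hwamax hb
          · rw [Set.mem_singleton_iff] at hb; exact hwv hb)
      have hgv : g v < g w := hg v (Or.inr rfl)
      have hgF : ∀ u ∈ amax ψ V, g u < g w := fun u hu => hg u (Or.inl hu)
      have hmax : ∀ u ∈ V, u ≠ v → (-ψ) u < (-ψ) v := by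
        intro u hu huv
        rcases lt_or_eq_of_le (hvA.2 u hu) with h | h
        · exact h
        · exfalso
          have huA : u ∈ amax (-ψ) V := ⟨hu, fun z hz => h ▸ hvA.2 z hz⟩
          rw [hAv, Set.mem_singleton_iff] at huA
          exact huv huA
      obtain ⟨t, hrw, hvAm, ⟨u2, hu2, hu2v⟩, hach⟩ := pivot hVfin hvV hwV hwv hmax hgv
      refine ⟨g + t • (-ψ), ?_, ?_⟩
      · intro u hu
        rcases eq_or_ne u v with rfl | huv
        · exact hAlt u hvA
        · by_contra hcon
          have huc : ψ u = c := le_antisymm (hQle u (hVQ hu.1)) (not_lt.1 hcon)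
          have huamax : u ∈ amax ψ V :=
            ⟨hu.1, fun z hz => (hQle z (hVQ hz)).trans huc.ge⟩
          have hgu : g u < g w := hgF u huamax
          have h1 := hach u hu huv
          -- denominators
          have hψv : ψ v < c := hAlt v hvA
          have hdw : (0 : ℝ) < ψ w - ψ v := by
            have := hmax w hwV hwv
            simp only [LinearMap.neg_apply, neg_lt_neg_iff] at this
            linarith
          have hdu : (0 : ℝ) < ψ u - ψ v := by rw [huc]; linarith
          simp only [LinearMap.neg_apply] at hrw h1
          have hrw' : g w - g v ≤ t * (ψ w - ψ v) := by
            have h2 : (g w - g v) / (-ψ v - -ψ w) ≤ t := hrw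
            rw [div_le_iff₀ (by linarith : (0:ℝ) < -ψ v - -ψ w)] at h2
            nlinarith
          have h1' : t * (ψ u - ψ v) ≤ g u - g v := by
            rw [le_div_iff₀ (by linarith : (0:ℝ) < -ψ v - -ψ u)] at h1
            nlinarith
          have htpos : 0 < t := by
            have : 0 < (g w - g v) / (ψ w - ψ v) := div_pos (by linarith) hdw
            nlinarith [hrw']
          have : ψ u - ψ v ≤ ψ w - ψ v → False := by intro h; rw [huc] at h; linarith
          nlinarith
      · have hsub : ({v, u2} : Set (Fin n → ℝ)) ⊆ amax (g + t • (-ψ)) V := by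
          intro z hz; rcases hz with rfl | hz
          · exact hvAm
          · rw [Set.mem_singleton_iff] at hz; exact hz ▸ hu2
        calc 2 = ({v, u2} : Set (Fin n → ℝ)).ncard := (Set.ncard_pair (Ne.symm hu2v)).symm
          _ ≤ (amax (g + t • (-ψ)) V).ncard :=
              Set.ncard_le_ncard hsub (hVfin.subset (fun h hh => hh.1))
  obtain ⟨χW, hWlt, hW2⟩ := stage1
  set W := amax χW V with hWdef
  have hWV : W ⊆ V := fun u hu => hu.1
  have hWfin : W.Finite := hVfin.subset hWV
  have hexW : ∀ u ∈ W, u ∈ (convexHull ℝ W).extremePoints ℝ := by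
    intro u hu
    have h1 : u ∈ Q.extremePoints ℝ := hWV hu
    have hsub : convexHull ℝ W ⊆ Q := hQV ▸ convexHull_mono hWV
    exact ⟨subset_convexHull ℝ W hu, fun x₁ h₁ x₂ h₂ hseg =>
      h1.2 (hsub h₁) (hsub h₂) hseg⟩
  obtain ⟨x, y, χ', hxy, hsubW, hχ'⟩ := descent W.ncard W hWfin le_rfl hW2 hexW
  have hB : (amax χ' (amax χW V)).Nonempty := by
    rw [← hWdef, hχ']; exact ⟨x, Or.inl rfl⟩
  obtain ⟨ε, hε, hεeq⟩ := combine hVfin hB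
  have hAM : amax (χW + ε • χ') V = {x, y} := by rw [hεeq, ← hWdef, hχ']
  have hxW : x ∈ W := hsubW (Or.inl rfl)
  have hyW : y ∈ W := hsubW (Or.inr rfl)
  refine ⟨x, y, hWV hxW, hWV hyW, hxy, ⟨χW + ε • χ', ?_⟩, ?_⟩
  · rw [← hQV, face_eq hVfin hVne, hAM]
  · ext z
    simp only [Set.mem_inter_iff, Set.mem_empty_iff_false, iff_false, not_and]
    intro hz1 hz2
    have hge : c ≤ ψ z := hFge z hz2
    rw [convexHull_pair] at hz1
    obtain ⟨a, b, ha, hb, hab, rfl⟩ := hz1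
    have hψx : ψ x < c := hWlt x hxW
    have hψy : ψ y < c := hWlt y hyW
    have hval : ψ (a • x + b • y) = a * ψ x + b * ψ y := by
      simp [map_add, map_smul, smul_eq_mul]
    rw [hval] at hge
    rcases eq_or_lt_of_le ha with ha0 | hapos
    · have hb1 : b = 1 := by linarith
      rw [← ha0, hb1] at hge; linarith
    · have h1 : a * ψ x < a * c := mul_lt_mul_of_pos_left hψx hapos
      have h2 : b * ψ y ≤ b * c := mul_le_mul_of_nonneg_left hψy.le hb
      have h3 : a * c + b * c = c := by rw [← add_mul, hab, one_mul]
      linarith
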